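/- Let J be a real 2×2 matrix with J₁₁ > 0, tr J = J₁₁ + J₂₂ < 0 and det J > 0. Set P = J₁₁ J₂₂ − 2 J₁₂ J₂₁. Then P² − J₁₁² J₂₂² > 0, and for every d > d_c := (P + √(P² − J₁₁² J₂₂²))/J₁₁² there exists k > 0 such that det(J − k²·diag(1,d)) < 0; consequently the matrix J − k²·diag(1,d) has a real eigenvalue λ > 0, i.e. there exist λ > 0 and a nonzero vector v ∈ ℝ² with (J − k²·diag(1,d)) v = λ v. -/
import Mathlib

/-- Any real 2×2 matrix with negative determinant has a positive real eigenvalue. -/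
lemma eigen_of_det_neg (M : Matrix (Fin 2) (Fin 2) ℝ) (h : M.det < 0) :
    ∃ lam : ℝ, 0 < lam ∧ ∃ v : Fin 2 → ℝ, v ≠ 0 ∧ M.mulVec v = lam • v := by
  have hdet : M 0 0 * M 1 1 - M 0 1 * M 1 0 < 0 := by rwa [Matrix.det_fin_two] at h
  set a := M 0 0 with ha0
  set b := M 0 1 with hb0
  set c := M 1 0 with hc0
  set e := M 1 1 with he0
  by_cases hb : b = 0
  · have hbc0 : b * c = 0 := by rw [hb]; ring_nf
    have hae : a * e < 0 := by linarith
    rcases lt_or_ge a 0 with ha | ha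
    · have he : 0 < e := by nlinarith
      refine ⟨e, he, ![0, 1], ?_, ?_⟩
      · intro hv
        have := congrFun hv 1
        simp at this
      · funext i
        fin_cases i <;>
          simp [Matrix.mulVec, dotProduct, Fin.sum_univ_two, ← ha0, ← hb0, ← hc0,
            ← he0, hb] <;> ring
    · have ha' : 0 < a := lt_of_le_of_ne ha (by intro h0; rw [← h0] at hae; simp at hae)
      have he : e < 0 := by nlinarith
      refine ⟨a, ha', ![a - e, c], ?_, ?_⟩
      · intro hv
        have := congrFun hv 0
        simp at this
        nlinarith
      · funext i
        fin_cases i <;>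
          simp [Matrix.mulVec, dotProduct, Fin.sum_univ_two, ← ha0, ← hb0, ← hc0,
            ← he0, hb] <;> ring
  · obtain ⟨s, hsnn, hs2⟩ : ∃ s : ℝ, 0 ≤ s ∧ s ^ 2 = (a + e) ^ 2 - 4 * (a * e - b * c) :=
      ⟨Real.sqrt _, Real.sqrt_nonneg _, Real.sq_sqrt (by nlinarith)⟩
    have hlam : 0 < ((a + e) + s) / 2 := by
      nlinarith [hs2, hsnn, hdet, sq_nonneg (s + (a + e))]
    have hchar : (((a + e) + s) / 2) ^ 2 - (a + e) * (((a + e) + s) / 2)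
        + (a * e - b * c) = 0 := by linear_combination hs2 / 4
    refine ⟨((a + e) + s) / 2, hlam, ![b, ((a + e) + s) / 2 - a], ?_, ?_⟩
    · intro hv
      have := congrFun hv 0
      simp at this
      exact hb this
    · funext i
      fin_cases i <;>
        simp [Matrix.mulVec, dotProduct, Fin.sum_univ_two, ← ha0, ← hb0, ← hc0, ← he0] <;>
        first
        | linear_combination (-1/4 : ℝ) * hs2
        | linear_combination (1/4 : ℝ) * hs2
        | ring

/-- Diffusion-driven instability: if J₁₁ > 0, tr J < 0 and det J > 0, then with
P = J₁₁J₂₂ − 2J₁₂J₂₁ one has P² − J₁₁²J₂₂² > 0, and for every diffusion ratio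
d > d_c = (P + √(P² − J₁₁²J₂₂²))/J₁₁² there exists a wavenumber k > 0 with
det(J − k²·diag(1,d)) < 0, so that J − k²·diag(1,d) has a real eigenvalue λ > 0. -/
theorem diffusion_driven_instability (J : Matrix (Fin 2) (Fin 2) ℝ)
    (h11 : 0 < J 0 0) (htr : Matrix.trace J < 0) (hdet : 0 < J.det) :
    (J 0 0 * J 1 1 - 2 * J 0 1 * J 1 0) ^ 2 - (J 0 0) ^ 2 * (J 1 1) ^ 2 > 0 ∧
    ∀ d : ℝ,
      d > (J 0 0 * J 1 1 - 2 * J 0 1 * J 1 0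
            + Real.sqrt ((J 0 0 * J 1 1 - 2 * J 0 1 * J 1 0) ^ 2
                - (J 0 0) ^ 2 * (J 1 1) ^ 2)) / (J 0 0) ^ 2 →
      ∃ k : ℝ, 0 < k ∧ (J - k ^ 2 • Matrix.diagonal ![1, d]).det < 0 ∧
        ∃ lam : ℝ, 0 < lam ∧ ∃ v : Fin 2 → ℝ, v ≠ 0 ∧
          (J - k ^ 2 • Matrix.diagonal ![1, d]).mulVec v = lam • v := by
  have hdet2 : 0 < J 0 0 * J 1 1 - J 0 1 * J 1 0 := by rwa [Matrix.det_fin_two] at hdet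
  have htr2 : J 0 0 + J 1 1 < 0 := by rwa [Matrix.trace_fin_two] at htr
  set a := J 0 0 with ha0
  set b := J 0 1 with hb0
  set c := J 1 0 with hc0
  set e := J 1 1 with he0
  have he : e < 0 := by linarith
  have hbc : b * c < 0 := by nlinarith
  have hdisc : (a * e - 2 * b * c) ^ 2 - a ^ 2 * e ^ 2 > 0 := by nlinarith
  refine ⟨hdisc, fun d hd => ?_⟩
  have hsnn : 0 ≤ Real.sqrt ((a * e - 2 * b * c) ^ 2 - a ^ 2 * e ^ 2) := Real.sqrt_nonneg _
  have hs2 : (Real.sqrt ((a * e - 2 * b * c) ^ 2 - a ^ 2 * e ^ 2)) ^ 2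
      = (a * e - 2 * b * c) ^ 2 - a ^ 2 * e ^ 2 := Real.sq_sqrt hdisc.le
  have hda : a ^ 2 * d > (a * e - 2 * b * c)
      + Real.sqrt ((a * e - 2 * b * c) ^ 2 - a ^ 2 * e ^ 2) := by
    have := (div_lt_iff₀ (by positivity : (0:ℝ) < a ^ 2)).mp hd
    linarith [this]
  have hP : a * e - 2 * b * c > -(a * e) := by nlinarith
  have hade : 0 < a * d + e := by nlinarith
  have hdpos : 0 < d := by nlinarith
  have hquad : a ^ 2 * d ^ 2 - 2 * (a * e - 2 * b * c) * d + e ^ 2 > 0 := by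
    nlinarith [hs2, hsnn, hda]
  have htpos : 0 < (a * d + e) / (2 * d) := by positivity
  obtain ⟨k, hkpos, hk2⟩ : ∃ k : ℝ, 0 < k ∧ k ^ 2 * (2 * d) = a * d + e := by
    refine ⟨Real.sqrt ((a * d + e) / (2 * d)), Real.sqrt_pos.mpr htpos, ?_⟩
    rw [Real.sq_sqrt htpos.le]
    field_simp
  have hM : (J - k ^ 2 • Matrix.diagonal ![1, d]).det
      = (a - k ^ 2) * (e - k ^ 2 * d) - b * c := by
    rw [Matrix.det_fin_two]
    simp [Matrix.sub_apply, Matrix.smul_apply, Matrix.diagonal_apply_eq,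
      Matrix.diagonal_apply_ne, ← ha0, ← hb0, ← hc0, ← he0]
    try ring
  have key : ((a - k ^ 2) * (e - k ^ 2 * d) - b * c) * (4 * d)
      = -(a ^ 2 * d ^ 2 - 2 * (a * e - 2 * b * c) * d + e ^ 2)
        + (k ^ 2 * (2 * d) - (a * d + e)) ^ 2 := by ring
  rw [hk2] at key
  simp only [sub_self, ne_eq, OfNat.ofNat_ne_zero, not_false_eq_true, zero_pow, add_zero] at key
  have hdetneg : (J - k ^ 2 • Matrix.diagonal ![1, d]).det < 0 := by
    rw [hM]
    by_contra hcon
    push_neg at hcon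
    have h1 : 0 ≤ ((a - k ^ 2) * (e - k ^ 2 * d) - b * c) * (4 * d) :=
      mul_nonneg hcon (by linarith)
    rw [key] at h1
    linarith
  exact ⟨k, hkpos, hdetneg, eigen_of_det_neg _ hdetneg⟩
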